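/- arXiv:1102.1135 — 4 statements merged into one kernel-verified Lean document; each statement's English description precedes it below -/
import Mathlib

section
/- Let M be a compact metric space, f : M → M a homeomorphism, and p a periodic point of f with the property that there exists η > 0 such that every point x whose positive semitrajectory O₊(x,f) is contained in N(η, O(p,f)) belongs to W^s(p) (a local characterization of the stable set, valid e.g. for hyperbolic periodic points). Let q¹ ∈ W^s(p) and write q¹_k = f^k(q¹). Then for every R > 0 and every ε₀ with 0 < ε₀ < R/2 there exists ε with 0 < ε < ε₀ such that: for every sequence ξ = (x_k)_{k∈ℤ} in M satisfying x_k = q¹_k for all k ≥ 1 and x_k ∉ N(ε₀, O(p,f)) for all k < 1, and every point q² (with q²_k = f^k(q²)) satisfying dist(q¹_1, q²_1) < ε, ξ ⊂ N(ε, O(q²,f)) and O(q²,f) ⊂ N(ε, ξ), one has q² ∈ W^s(p) and dist(q¹_k, q²_k) ≤ R for all k ≥ 1. -/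
open Filter Metric

noncomputable section

/-- The full orbit `O(p,f) = {f^k p : k ∈ ℤ}` of a point under a bijection. -/
def orbitZ {M : Type*} (f : Equiv.Perm M) (p : M) : Set M :=
  Set.range fun k : ℤ => (f ^ k) p

/-- The stable set `W^s(p)` of a (periodic) point:
points whose forward iterates approach the forward iterates of some point of `O(p,f)`. -/
def stableSet {M : Type*} [MetricSpace M] (f : Equiv.Perm M) (p : M) : Set M :=
  {q | ∃ r ∈ orbitZ f p,
    Tendsto (fun k : ℕ => dist ((f ^ (k : ℤ)) q) ((f ^ (k : ℤ)) r)) atTop (nhds 0)}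

/-- every finite set of positive reals has a positive lower bound. -/
private lemma exists_pos_lb {D : Set ℝ} (hD : D.Finite) (h : ∀ d ∈ D, 0 < d) :
    ∃ c : ℝ, 0 < c ∧ ∀ d ∈ D, c ≤ d := by
  classical
  rcases Set.eq_empty_or_nonempty D with hE | hNE
  · exact ⟨1, one_pos, by simp [hE]⟩
  · have hne : hD.toFinset.Nonempty := by
      rwa [Set.Finite.toFinset_nonempty]
    refine ⟨hD.toFinset.min' hne, ?_, ?_⟩
    · exact h _ (hD.mem_toFinset.mp (hD.toFinset.min'_mem hne))
    · intro d hd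
      exact hD.toFinset.min'_le d (hD.mem_toFinset.mpr hd)

/-- uniform continuity of all iterates up to a fixed horizon. -/
private lemma uc_iter {M : Type*} [MetricSpace M] [CompactSpace M]
    {g : M → M} (hg : Continuous g) (T : ℕ) {θ : ℝ} (hθ : 0 < θ) :
    ∃ δ : ℝ, 0 < δ ∧ δ ≤ θ ∧ ∀ u v : M, dist u v ≤ δ → ∀ t : ℕ, t ≤ T →
      dist (g^[t] u) (g^[t] v) ≤ θ := by
  induction T with
  | zero =>
    refine ⟨θ, hθ, le_refl θ, fun u v h t ht => ?_⟩
    have ht0 : t = 0 := Nat.le_zero.mp ht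
    subst ht0
    simpa using h
  | succ n ih =>
    obtain ⟨δ, hδpos, hδθ, H⟩ := ih
    have hug : UniformContinuous g := CompactSpace.uniformContinuous_of_continuous hg
    obtain ⟨δ', hδ'pos, H'⟩ := Metric.uniformContinuous_iff.mp hug δ hδpos
    refine ⟨min (δ' / 2) δ, by positivity, (min_le_right _ _).trans hδθ, ?_⟩
    intro u v huv t ht
    match t with
    | 0 =>
      simpa using huv.trans ((min_le_right _ _).trans hδθ)
    | (s+1) =>
      rw [Function.iterate_succ_apply, Function.iterate_succ_apply]
      refine H _ _ ?_ s (Nat.succ_le_succ_iff.mp ht)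
      have h1 : dist u v < δ' := lt_of_le_of_lt (huv.trans (min_le_left _ _)) (by linarith)
      exact le_of_lt (H' h1)

/-- the stable set is invariant under (integer powers of) `f`. -/
private lemma stableSet_shift {M : Type*} [MetricSpace M] (f : Equiv.Perm M) (p : M)
    (N : ℤ) (q : M) (h : (f ^ N) q ∈ stableSet f p) : q ∈ stableSet f p := by
  have key1 : ∀ (a b : ℤ) (z : M), (f ^ (a + b)) z = (f ^ a) ((f ^ b) z) := by
    intro a b z; rw [zpow_add]; rfl
  obtain ⟨r2, ⟨s, hs⟩, hten⟩ := h
  simp only [] at hs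
  refine ⟨(f ^ (-N + s)) p, ⟨-N + s, rfl⟩, ?_⟩
  have hr2 : (f ^ (-N + s)) p = (f ^ (-N : ℤ)) r2 := by rw [key1, hs]
  have hcomp : Tendsto (fun k : ℕ => ((k : ℤ) - N).toNat) atTop atTop := by
    refine tendsto_atTop_atTop.mpr fun b => ⟨b + N.toNat, fun a ha => ?_⟩
    have h1 : (N : ℤ) ≤ (N.toNat : ℤ) := Int.self_le_toNat N
    have h2 : (b : ℤ) + (N.toNat : ℤ) ≤ (a : ℤ) := by exact_mod_cast ha
    have h3 : (b : ℤ) ≤ (a : ℤ) - N := by linarith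
    exact (Int.le_toNat (by linarith [Int.natCast_nonneg b])).mpr h3
  have hmain := hten.comp hcomp
  refine hmain.congr' ?_
  filter_upwards [eventually_ge_atTop N.toNat] with k hk
  have hkN : N ≤ (k : ℤ) := le_trans (Int.self_le_toNat N) (by exact_mod_cast hk)
  have hc : ((((k : ℤ) - N).toNat : ℕ) : ℤ) = (k : ℤ) - N :=
    Int.toNat_of_nonneg (by linarith)
  show dist ((f ^ ((((k:ℤ) - N).toNat : ℕ) : ℤ)) ((f ^ N) q))
        ((f ^ ((((k:ℤ) - N).toNat : ℕ) : ℤ)) r2)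
      = dist ((f ^ ((k:ℕ) : ℤ)) q) ((f ^ ((k:ℕ) : ℤ)) ((f ^ (-N + s)) p))
  rw [hc, hr2]
  have hsub : (k : ℤ) - N + N = ((k:ℕ) : ℤ) := by ring
  have hsub2 : (k : ℤ) + -N = (k : ℤ) - N := by ring
  have e1 : (f ^ ((k : ℤ) - N)) ((f ^ N) q) = (f ^ ((k:ℕ) : ℤ)) q := by
    conv_rhs => rw [← hsub]
    rw [key1]
  have e2 : (f ^ ((k:ℕ) : ℤ)) ((f ^ (-N : ℤ)) r2) = (f ^ ((k : ℤ) - N)) r2 := by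
    rw [← hsub2]
    exact (key1 _ _ _).symm
  rw [e1, e2]

/-- Main Lemma (Lemma 1): any exact trajectory orbitally shadowing a pseudotrajectory
that follows `O(q¹,f)` (with `q¹ ∈ W^s(p)`) for positive times and stays away from
`O(p,f)` for negative times must lie in `W^s(p)` and stay `R`-close to `O(q¹,f)`
at positive times. -/
theorem orbital_shadowing_forces_stable_manifold
    {M : Type*} [MetricSpace M] [CompactSpace M]
    (f : Equiv.Perm M) (hf : Continuous (⇑f)) (hf' : Continuous (⇑f.symm))
    (p : M) (m : ℕ) (hm : 0 < m) (hp : (f ^ m) p = p)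
    (η : ℝ) (hη : 0 < η)
    (hloc : ∀ x : M, (∀ k : ℕ, (f ^ (k : ℤ)) x ∈ thickening η (orbitZ f p)) →
      x ∈ stableSet f p)
    (q1 : M) (hq1 : q1 ∈ stableSet f p)
    (R ε₀ : ℝ) (hR : 0 < R) (hε₀ : 0 < ε₀) (hε₀R : ε₀ < R / 2) :
    ∃ ε : ℝ, 0 < ε ∧ ε < ε₀ ∧
      ∀ x : ℤ → M,
        (∀ k : ℤ, 1 ≤ k → x k = (f ^ k) q1) →
        (∀ k : ℤ, k < 1 → x k ∉ thickening ε₀ (orbitZ f p)) →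
        ∀ q2 : M,
          dist ((f ^ (1 : ℤ)) q1) ((f ^ (1 : ℤ)) q2) < ε →
          (∀ k : ℤ, x k ∈ thickening ε (orbitZ f q2)) →
          orbitZ f q2 ⊆ thickening ε (Set.range x) →
          q2 ∈ stableSet f p ∧ ∀ k : ℤ, 1 ≤ k → dist ((f ^ k) q1) ((f ^ k) q2) ≤ R := by
  classical
  -- basic algebra of powers
  have key1 : ∀ (a b : ℤ) (z : M), (f ^ (a + b)) z = (f ^ a) ((f ^ b) z) := by
    intro a b z; rw [zpow_add]; rfl
  have key2 : ∀ (t : ℕ) (z : M), (f ^ ((t : ℕ) : ℤ)) z = (⇑f)^[t] z := by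
    intro t z; rw [zpow_natCast]; rfl
  have hiter : ∀ (n : ℤ) (t : ℕ) (z : M),
      (f ^ (n + (t : ℤ))) z = (⇑f)^[t] ((f ^ n) z) := by
    intro n t z
    rw [add_comm, key1, key2]
  -- the orbit of p and its properties
  have hAinv : ∀ (k : ℤ) (z : M), z ∈ orbitZ f p → (f ^ k) z ∈ orbitZ f p := by
    rintro k z ⟨s, rfl⟩
    exact ⟨k + s, (key1 k s p)⟩
  have hfixm : Function.IsFixedPt (⇑(f ^ ((m : ℕ) : ℤ))) p := by
    show (f ^ ((m : ℕ) : ℤ)) p = p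
    rw [zpow_natCast]; exact hp
  have hpfix : ∀ t : ℤ, ((f ^ ((m : ℕ) : ℤ)) ^ t) p = p := fun t => hfixm.perm_zpow t
  have hmodA : ∀ k : ℤ, (f ^ k) p = (f ^ (k % (m : ℤ))) p := by
    intro k
    conv_lhs => rw [← Int.emod_add_mul_ediv k (m : ℤ)]
    rw [key1]
    have hfp : (f ^ ((m : ℤ) * (k / (m : ℤ)))) p = p := by
      rw [zpow_mul]; exact hpfix _
    rw [hfp]
  have hAfin : (orbitZ f p).Finite := by
    apply Set.Finite.subset (Set.finite_range (fun i : Fin m => (f ^ ((i : ℕ) : ℤ)) p))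
    rintro z ⟨k, rfl⟩
    have h1 : 0 ≤ k % (m : ℤ) := Int.emod_nonneg k (by exact_mod_cast hm.ne')
    have h2 : k % (m : ℤ) < (m : ℤ) := Int.emod_lt_of_pos k (by exact_mod_cast hm)
    refine ⟨⟨(k % (m : ℤ)).toNat, by omega⟩, ?_⟩
    show (f ^ (((k % (m : ℤ)).toNat : ℕ) : ℤ)) p = (f ^ k) p
    rw [Int.toNat_of_nonneg h1]
    exact (hmodA k).symm
  -- the asymptotic orbit of q1
  obtain ⟨r, hrA, hψ0⟩ := hq1
  -- tails of dist (f^k q1) (f^k r)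
  have tailLem : ∀ θ : ℝ, 0 < θ →
      ∃ N : ℕ, ∀ k : ℤ, (N : ℤ) ≤ k → dist ((f ^ k) q1) ((f ^ k) r) ≤ θ := by
    intro θ hθ
    obtain ⟨N, hN⟩ := (Metric.tendsto_atTop.mp hψ0) θ hθ
    refine ⟨N, fun k hk => ?_⟩
    have hk0 : 0 ≤ k := le_trans (Int.natCast_nonneg N) hk
    obtain ⟨n, rfl⟩ : ∃ n : ℕ, k = (n : ℤ) := ⟨k.toNat, (Int.toNat_of_nonneg hk0).symm⟩
    have hn : N ≤ n := by exact_mod_cast hk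
    have h := hN n hn
    rw [Real.dist_eq, sub_zero, abs_of_nonneg dist_nonneg] at h
    exact h.le
  -- minimal separation ρ of the (finite) orbit of p
  obtain ⟨ρ, hρpos, hρlb⟩ := exists_pos_lb
    (D := (fun q : M × M => dist q.1 q.2) ''
      {q : M × M | q.1 ∈ orbitZ f p ∧ q.2 ∈ orbitZ f p ∧ q.1 ≠ q.2})
    (Set.Finite.image _ ((hAfin.prod hAfin).subset (fun q hq => ⟨hq.1, hq.2.1⟩)))
    (by
      rintro d ⟨⟨a, b⟩, ⟨ha, hb, hab⟩, rfl⟩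
      exact dist_pos.mpr hab)
  have hρsep : ∀ a b : M, a ∈ orbitZ f p → b ∈ orbitZ f p → a ≠ b → ρ ≤ dist a b :=
    fun a b ha hb hab => hρlb _ ⟨(a, b), ⟨ha, hb, hab⟩, rfl⟩
  -- if q1 is on the orbit of p, then q1 = r
  have hq1r : q1 ∈ orbitZ f p → q1 = r := by
    intro hq1A
    obtain ⟨k, hk⟩ := tailLem (ρ / 2) (by linarith)
    have hk' := hk (k : ℤ) le_rfl
    by_contra hne
    have hfk : (f ^ ((k : ℕ) : ℤ)) q1 ≠ (f ^ ((k : ℕ) : ℤ)) r := by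
      intro h
      exact hne ((f ^ ((k : ℕ) : ℤ)).injective h)
    have := hρsep _ _ (hAinv _ _ hq1A) (hAinv _ _ hrA) hfk
    linarith
  -- β
  set β : ℝ := min (min η ε₀) (min R ρ) / 8 with hβdef
  have hβpos : 0 < β := by
    have := lt_min (lt_min hη hε₀) (lt_min hR hρpos)
    positivity
  have hβη : 8 * β ≤ η := by
    have h1 : min (min η ε₀) (min R ρ) ≤ η := (min_le_left _ _).trans (min_le_left _ _)
    rw [hβdef]; linarith
  have hβε₀ : 8 * β ≤ ε₀ := by
    have h1 : min (min η ε₀) (min R ρ) ≤ ε₀ := (min_le_left _ _).trans (min_le_right _ _)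
    rw [hβdef]; linarith
  have hβR : 8 * β ≤ R := by
    have h1 : min (min η ε₀) (min R ρ) ≤ R := (min_le_right _ _).trans (min_le_left _ _)
    rw [hβdef]; linarith
  have hβρ : 8 * β ≤ ρ := by
    have h1 : min (min η ε₀) (min R ρ) ≤ ρ := (min_le_right _ _).trans (min_le_right _ _)
    rw [hβdef]; linarith
  -- first tail index T
  obtain ⟨T, hTtail⟩ := tailLem (β / 8) (by linarith)
  -- wrong-phase clearance μ for early indices
  obtain ⟨μ, hμpos, hμlb⟩ := exists_pos_lb
    (D := (fun q : ℤ × M => dist ((f ^ q.1) q1) q.2) ''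
      {q : ℤ × M | q.1 ∈ Set.Icc (1 : ℤ) (T : ℤ) ∧ q.2 ∈ orbitZ f p ∧ q.2 ≠ (f ^ q.1) r})
    (Set.Finite.image _ (((Set.finite_Icc (1 : ℤ) (T : ℤ)).prod hAfin).subset
      (fun q hq => ⟨hq.1, hq.2.1⟩)))
    (by
      rintro d ⟨⟨j, a⟩, ⟨hj, haA, hane⟩, rfl⟩
      dsimp only at hj haA hane ⊢
      rw [dist_pos]
      intro heq
      have hq1A : q1 ∈ orbitZ f p := by
        have h1 : (f ^ (-j)) a ∈ orbitZ f p := hAinv _ _ haA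
        have h2 : (f ^ (-j)) a = q1 := by
          rw [← heq, ← key1]
          simp
        rwa [h2] at h1
      exact hane (by rw [← heq, hq1r hq1A]))
  have hμsep : ∀ j : ℤ, 1 ≤ j → j ≤ (T : ℤ) → ∀ a : M, a ∈ orbitZ f p →
      a ≠ (f ^ j) r → μ ≤ dist ((f ^ j) q1) a :=
    fun j hj1 hjT a haA hne => hμlb _ ⟨(j, a), ⟨⟨hj1, hjT⟩, haA, hne⟩, rfl⟩
  -- e : propagation level for horizon T, also below μ
  obtain ⟨e0, he0pos, he0θ, he0prop⟩ := uc_iter hf T (θ := β / 2) (by linarith)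
  set e : ℝ := min e0 (min (β / 2) (μ / 2)) with hedef
  have hepos : 0 < e := by
    have := lt_min he0pos (lt_min (by linarith : (0:ℝ) < β / 2) (by linarith : (0:ℝ) < μ / 2))
    rwa [hedef]
  have heβ : e ≤ β / 2 := by
    rw [hedef]; exact (min_le_right _ _).trans (min_le_left _ _)
  have heμ : e ≤ μ / 2 := by
    rw [hedef]; exact (min_le_right _ _).trans (min_le_right _ _)
  have heprop : ∀ u v : M, dist u v ≤ e → ∀ t : ℕ, t ≤ T →
      dist ((⇑f)^[t] u) ((⇑f)^[t] v) ≤ β / 2 := by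
    intro u v h t ht
    exact he0prop u v (h.trans (by rw [hedef]; exact min_le_left _ _)) t ht
  -- second tail index T₂
  obtain ⟨T21, hT21⟩ := tailLem (e / 8) (by linarith)
  set T₂ : ℕ := max T21 T + 1 with hT₂def
  have hT₂pos : 0 < T₂ := by omega
  have hTT₂ : T ≤ T₂ := by omega
  have hT₂tail : ∀ k : ℤ, (T₂ : ℤ) ≤ k → dist ((f ^ k) q1) ((f ^ k) r) ≤ e / 8 := by
    intro k hk
    refine hT21 k (le_trans ?_ hk)
    have : T21 ≤ T₂ := by omega
    exact_mod_cast this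
  -- ε : propagation level for horizon T₂
  obtain ⟨ε1, hε1pos, hε1θ, hε1prop⟩ := uc_iter hf T₂ (θ := e / 8) (by linarith)
  set ε : ℝ := min ε1 (e / 8) with hεdef
  have hεpos : 0 < ε := by
    have := lt_min hε1pos (by linarith : (0:ℝ) < e / 8)
    rwa [hεdef]
  have hεe : ε ≤ e / 8 := by rw [hεdef]; exact min_le_right _ _
  have hεprop : ∀ u v : M, dist u v ≤ ε → ∀ t : ℕ, t ≤ T₂ →
      dist ((⇑f)^[t] u) ((⇑f)^[t] v) ≤ e / 8 := by
    intro u v h t ht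
    exact hε1prop u v (h.trans (by rw [hεdef]; exact min_le_left _ _)) t ht
  have hεε₀ : ε < ε₀ := by linarith
  refine ⟨ε, hεpos, hεε₀, ?_⟩
  intro x hx1 hx2 q2 hq12 hξ hO
  -- resynchronization lemma
  have resync : ∀ n : ℤ, dist ((f ^ n) q2) ((f ^ n) r) ≤ e / 4 →
      ∃ j : ℤ, 1 ≤ j ∧ (f ^ j) r = (f ^ n) r ∧
        dist ((f ^ n) q2) ((f ^ j) q1) < ε ∧
        dist ((f ^ j) q1) ((f ^ j) r) ≤ e / 2 := by
    intro n hφ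
    have hmem : (f ^ n) q2 ∈ thickening ε (Set.range x) := hO ⟨n, rfl⟩
    rw [Metric.mem_thickening_iff] at hmem
    obtain ⟨z, ⟨k, rfl⟩, hzd⟩ := hmem
    rcases lt_or_ge k 1 with hk | hk
    · exfalso
      apply hx2 k hk
      rw [Metric.mem_thickening_iff]
      refine ⟨(f ^ n) r, hAinv n r hrA, ?_⟩
      have h1 := dist_triangle (x k) ((f ^ n) q2) ((f ^ n) r)
      have h2 : dist (x k) ((f ^ n) q2) = dist ((f ^ n) q2) (x k) := dist_comm _ _
      linarith
    · rw [hx1 k hk] at hzd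
      have hd2 : dist ((f ^ k) q1) ((f ^ n) r) ≤ 3 * e / 8 := by
        have h1 := dist_triangle ((f ^ k) q1) ((f ^ n) q2) ((f ^ n) r)
        have h2 : dist ((f ^ k) q1) ((f ^ n) q2) = dist ((f ^ n) q2) ((f ^ k) q1) :=
          dist_comm _ _
        linarith
      have hphase : (f ^ k) r = (f ^ n) r := by
        rcases le_or_gt k (T : ℤ) with hkT | hkT
        · by_contra hne
          have := hμsep k hk hkT ((f ^ n) r) (hAinv n r hrA) (fun h => hne h.symm)
          linarith
        · by_contra hne
          have htl := hTtail k hkT.le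
          have hsep := hρsep _ _ (hAinv k r hrA) (hAinv n r hrA) hne
          have h1 := dist_triangle ((f ^ k) r) ((f ^ k) q1) ((f ^ n) r)
          have h2 : dist ((f ^ k) r) ((f ^ k) q1) = dist ((f ^ k) q1) ((f ^ k) r) :=
            dist_comm _ _
          linarith
      refine ⟨k, hk, hphase, hzd, ?_⟩
      rw [hphase]
      linarith
  -- position propagation
  have track : ∀ (n j : ℤ), dist ((f ^ n) q2) ((f ^ j) q1) ≤ ε → ∀ t : ℕ, t ≤ T₂ →
      dist ((f ^ (n + (t : ℤ))) q2) ((f ^ (j + (t : ℤ))) q1) ≤ e / 8 := by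
    intro n j h t ht
    rw [hiter, hiter]
    exact hεprop _ _ h t ht
  -- ψ propagation along a certificate
  have ψprop : ∀ j : ℤ, 1 ≤ j → dist ((f ^ j) q1) ((f ^ j) r) ≤ e / 2 → ∀ t : ℕ, t ≤ T₂ →
      dist ((f ^ (j + (t : ℤ))) q1) ((f ^ (j + (t : ℤ))) r) ≤ β / 2 := by
    intro j hj hje t ht
    rcases le_or_gt t T with htT | htT
    · rw [hiter, hiter]
      exact heprop _ _ (hje.trans (by linarith)) t htT
    · have h1 : (T : ℤ) < (t : ℤ) := by exact_mod_cast htT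
      have := hTtail (j + (t : ℤ)) (by linarith)
      linarith
  -- one full run of the invariant
  have stepQ : ∀ n : ℤ,
      (∃ j : ℤ, 1 ≤ j ∧ (f ^ j) r = (f ^ n) r ∧
        dist ((f ^ n) q2) ((f ^ j) q1) < ε ∧ dist ((f ^ j) q1) ((f ^ j) r) ≤ e / 2) →
      (∀ t : ℕ, t ≤ T₂ → dist ((f ^ (n + (t : ℤ))) q2) ((f ^ (n + (t : ℤ))) r) ≤ e / 8 + β / 2) ∧
      (∃ j : ℤ, 1 ≤ j ∧ (f ^ j) r = (f ^ (n + (T₂ : ℤ))) r ∧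
        dist ((f ^ (n + (T₂ : ℤ))) q2) ((f ^ j) q1) < ε ∧
        dist ((f ^ j) q1) ((f ^ j) r) ≤ e / 2) := by
    rintro n ⟨j, hj1, hjp, hjd, hjψ⟩
    have hph : ∀ t : ℕ, (f ^ (j + (t : ℤ))) r = (f ^ (n + (t : ℤ))) r := by
      intro t
      rw [hiter, hiter, hjp]
    have hφt : ∀ t : ℕ, t ≤ T₂ →
        dist ((f ^ (n + (t : ℤ))) q2) ((f ^ (n + (t : ℤ))) r)
          ≤ e / 8 + dist ((f ^ (j + (t : ℤ))) q1) ((f ^ (j + (t : ℤ))) r) := by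
      intro t ht
      have h1 := dist_triangle ((f ^ (n + (t : ℤ))) q2) ((f ^ (j + (t : ℤ))) q1)
        ((f ^ (n + (t : ℤ))) r)
      have h2 : dist ((f ^ (j + (t : ℤ))) q1) ((f ^ (n + (t : ℤ))) r)
          = dist ((f ^ (j + (t : ℤ))) q1) ((f ^ (j + (t : ℤ))) r) := by
        rw [hph t]
      have h3 := track n j hjd.le t ht
      linarith
    constructor
    · intro t ht
      have := hφt t ht
      have := ψprop j hj1 hjψ t ht
      linarith
    · have hjT₂ : dist ((f ^ (j + (T₂ : ℤ))) q1) ((f ^ (j + (T₂ : ℤ))) r) ≤ e / 8 :=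
        hT₂tail _ (by linarith)
      have h1 := hφt T₂ le_rfl
      exact resync (n + (T₂ : ℤ)) (by linarith)
  -- the invariant holds at all renewal times
  have INV : ∀ i : ℕ,
      ∃ j : ℤ, 1 ≤ j ∧ (f ^ j) r = (f ^ (1 + (T₂ : ℤ) + (i : ℤ) * (T₂ : ℤ))) r ∧
        dist ((f ^ (1 + (T₂ : ℤ) + (i : ℤ) * (T₂ : ℤ))) q2) ((f ^ j) q1) < ε ∧
        dist ((f ^ j) q1) ((f ^ j) r) ≤ e / 2 := by
    intro i
    induction i with
    | zero =>
      have hb : dist ((f ^ ((1 : ℤ) + (T₂ : ℤ))) q2) ((f ^ ((1 : ℤ) + (T₂ : ℤ))) q1)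
          ≤ e / 8 := by
        have h0 : dist ((f ^ (1 : ℤ)) q2) ((f ^ (1 : ℤ)) q1) ≤ ε := by
          rw [dist_comm]; exact hq12.le
        exact track 1 1 h0 T₂ le_rfl
      have hψb : dist ((f ^ ((1 : ℤ) + (T₂ : ℤ))) q1) ((f ^ ((1 : ℤ) + (T₂ : ℤ))) r)
          ≤ e / 8 := hT₂tail _ (by linarith)
      have hφb : dist ((f ^ ((1 : ℤ) + (T₂ : ℤ))) q2) ((f ^ ((1 : ℤ) + (T₂ : ℤ))) r)
          ≤ e / 4 := by
        have h1 := dist_triangle ((f ^ ((1 : ℤ) + (T₂ : ℤ))) q2)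
          ((f ^ ((1 : ℤ) + (T₂ : ℤ))) q1) ((f ^ ((1 : ℤ) + (T₂ : ℤ))) r)
        linarith
      have h := resync ((1 : ℤ) + (T₂ : ℤ)) hφb
      have hidx : (1 : ℤ) + (T₂ : ℤ) + ((0 : ℕ) : ℤ) * (T₂ : ℤ) = 1 + (T₂ : ℤ) := by
        push_cast; ring
      rwa [hidx]
    | succ i ih =>
      have h := (stepQ _ ih).2
      have hidx : 1 + (T₂ : ℤ) + ((i : ℤ)) * (T₂ : ℤ) + (T₂ : ℤ)
          = 1 + (T₂ : ℤ) + (((i + 1 : ℕ)) : ℤ) * (T₂ : ℤ) := by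
        push_cast; ring
      rwa [hidx] at h
  -- global bound on the distance to the r-orbit
  have globalφ : ∀ n : ℤ, 1 + (T₂ : ℤ) ≤ n →
      dist ((f ^ n) q2) ((f ^ n) r) ≤ e / 8 + β / 2 := by
    intro n hn
    set s : ℕ := (n - (1 + (T₂ : ℤ))).toNat with hsdef
    have hsz : (s : ℤ) = n - (1 + (T₂ : ℤ)) := Int.toNat_of_nonneg (by linarith)
    have hdm : T₂ * (s / T₂) + s % T₂ = s := Nat.div_add_mod s T₂
    have hdmz : ((T₂ : ℤ)) * ((s / T₂ : ℕ) : ℤ) + ((s % T₂ : ℕ) : ℤ) = (s : ℤ) := by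
      exact_mod_cast hdm
    have hmul : ((s / T₂ : ℕ) : ℤ) * (T₂ : ℤ) = (T₂ : ℤ) * ((s / T₂ : ℕ) : ℤ) :=
      mul_comm _ _
    have hnrep : n = 1 + (T₂ : ℤ) + ((s / T₂ : ℕ) : ℤ) * (T₂ : ℤ) + ((s % T₂ : ℕ) : ℤ) := by
      rw [hmul]; linarith
    rw [hnrep]
    exact (stepQ _ (INV (s / T₂))).1 (s % T₂) (le_of_lt (Nat.mod_lt _ hT₂pos))
  constructor
  · -- q2 ∈ stableSet f p
    apply stableSet_shift f p (1 + (T₂ : ℤ)) q2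
    apply hloc
    intro k
    rw [Metric.mem_thickening_iff]
    refine ⟨(f ^ ((k : ℤ) + (1 + (T₂ : ℤ)))) r, hAinv _ _ hrA, ?_⟩
    have he1 : (f ^ ((k : ℕ) : ℤ)) ((f ^ ((1 : ℤ) + (T₂ : ℤ))) q2)
        = (f ^ ((k : ℤ) + (1 + (T₂ : ℤ)))) q2 := (key1 _ _ _).symm
    rw [he1]
    have hg := globalφ ((k : ℤ) + (1 + (T₂ : ℤ))) (by linarith [Int.natCast_nonneg k])
    linarith
  · -- the R-bound
    intro k hk
    rcases le_or_gt k (1 + (T₂ : ℤ)) with hk2 | hk2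
    · set t : ℕ := (k - 1).toNat with htdef
      have ht : (t : ℤ) = k - 1 := Int.toNat_of_nonneg (by linarith)
      have htT₂ : t ≤ T₂ := by
        have : (t : ℤ) ≤ (T₂ : ℤ) := by linarith
        exact_mod_cast this
      have h0 : dist ((f ^ (1 : ℤ)) q2) ((f ^ (1 : ℤ)) q1) ≤ ε := by
        rw [dist_comm]; exact hq12.le
      have h1 := track 1 1 h0 t htT₂
      have hk1t : (1 : ℤ) + (t : ℤ) = k := by linarith
      rw [hk1t] at h1
      rw [dist_comm] at h1
      linarith
    · have hφ := globalφ k hk2.le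
      have hψk : dist ((f ^ k) q1) ((f ^ k) r) ≤ β / 8 := by
        apply hTtail
        have h1 : (T : ℤ) ≤ (T₂ : ℤ) := by exact_mod_cast hTT₂
        linarith
      have h1 := dist_triangle ((f ^ k) q1) ((f ^ k) r) ((f ^ k) q2)
      have h2 : dist ((f ^ k) r) ((f ^ k) q2) = dist ((f ^ k) q2) ((f ^ k) r) :=
        dist_comm _ _
      linarith
end
end

section
/- Let M be a compact metric space, f : M → M a homeomorphism, and p a periodic point of f with the property that there exists η > 0 such that every point x whose negative semitrajectory O₋(x,f) is contained in N(η, O(p,f)) belongs to W^u(p). Let q¹ ∈ W^u(p) and write q¹_k = f^k(q¹). Then for every R > 0 and every ε₀ with 0 < ε₀ < R/2 there exists ε with 0 < ε < ε₀ such that: for every sequence ξ = (x_k)_{k∈ℤ} in M satisfying x_k = q¹_k for all k ≤ 1 and x_k ∉ N(ε₀, O(p,f)) for all k > 1, and every point q² (with q²_k = f^k(q²)) satisfying dist(q¹_1, q²_1) < ε, ξ ⊂ N(ε, O(q²,f)) and O(q²,f) ⊂ N(ε, ξ), one has q² ∈ W^u(p) and dist(q¹_k, q²_k) ≤ R for all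 k ≤ 1. -/
open Filter Metric

noncomputable section

/-- The unstable set `W^u(p)` of a (periodic) point:
points whose backward iterates approach the backward iterates of some point of `O(p,f)`. -/
def unstableSet {M : Type*} [MetricSpace M] (f : Equiv.Perm M) (p : M) : Set M :=
  {q | ∃ r ∈ orbitZ f p,
    Tendsto (fun k : ℕ => dist ((f ^ (-(k : ℤ))) q) ((f ^ (-(k : ℤ))) r)) atTop (nhds 0)}

/-!
The orbit `P = O(p,f)` is finite, hence `τ`-separated for some `τ > 0`. Since `ξ` avoids
`N(ε₀, P)` after time `1`, a point of `O(q²,f)` close to `P` can only shadow a point `f^j q¹`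
with `j ≤ 1`. This traps the past of `q²` near `P`, by downward induction on the time `k`:
* if `q¹ ∈ P`, then `f^k q²` is close to some `f^j q¹ ∈ P`, and separation forces
  `f^j q¹ = f^k q¹`;
* otherwise `q¹` converges in backward time to the orbit of some `r ∈ P`, while `f q¹ ∉ P`.
  A shadowed point `f^j q¹` from the far past is near `f^j r`, and separation forces
  `f^j r = f^k r`; one from the recent past is impossible, since `f^(1-j)` would carry
  `f^k q²` to a point of the already trapped past of `q²`, near `P`, that is also close to
  `f q¹`.
The hypothesis on `η` then puts `q²` into `W^u(p)`.
-/

open Topology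

section Orbit

variable {M : Type*} {f : Equiv.Perm M} {p y : M}

theorem zpow_apply_zpow_apply (f : Equiv.Perm M) (a b : ℤ) (x : M) :
    (f ^ a) ((f ^ b) x) = (f ^ (a + b)) x := by
  rw [zpow_add, Equiv.Perm.mul_apply]

theorem zpow_sub_one_apply (f : Equiv.Perm M) (k : ℤ) (x : M) :
    (f ^ (k - 1)) x = f.symm ((f ^ k) x) := by
  rw [sub_eq_neg_add, ← zpow_apply_zpow_apply, zpow_neg_one, Equiv.Perm.inv_def]

theorem zpow_apply_mem_orbitZ (hy : y ∈ orbitZ f p) (k : ℤ) : (f ^ k) y ∈ orbitZ f p := by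
  obtain ⟨i, rfl⟩ := hy
  exact ⟨k + i, (zpow_apply_zpow_apply f k i p).symm⟩

theorem zpow_apply_mem_orbitZ_iff (k : ℤ) : (f ^ k) y ∈ orbitZ f p ↔ y ∈ orbitZ f p := by
  refine ⟨fun h => ?_, fun h => zpow_apply_mem_orbitZ h k⟩
  simpa [zpow_apply_zpow_apply] using zpow_apply_mem_orbitZ h (-k)

theorem orbitZ_finite {m : ℕ} (hm : 0 < m) (hp : (f ^ m) p = p) : (orbitZ f p).Finite := by
  refine ((Set.finite_Ico (0 : ℤ) m).image fun k => (f ^ k) p).subset ?_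
  rintro _ ⟨k, rfl⟩
  have hper (t : ℤ) : (f ^ ((m : ℤ) * t)) p = p := by
    rw [zpow_mul, zpow_natCast]
    exact Equiv.Perm.zpow_apply_eq_self_of_apply_eq_self hp t
  refine ⟨k % m, ⟨Int.emod_nonneg _ (by omega), Int.emod_lt_of_pos _ (by omega)⟩, ?_⟩
  change (f ^ (k % m)) p = (f ^ k) p
  conv_rhs => rw [← Int.emod_add_mul_ediv k m, ← zpow_apply_zpow_apply, hper]

theorem continuous_perm_zpow [TopologicalSpace M] (hf : Continuous f) (hf' : Continuous f.symm)
    (k : ℤ) : Continuous (f ^ k) := by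
  induction k using Int.induction_on with
  | zero => exact continuous_id
  | succ n ih => rw [zpow_add_one, Equiv.Perm.coe_mul]; exact ih.comp hf
  | pred n ih => rw [zpow_sub_one, Equiv.Perm.coe_mul, Equiv.Perm.inv_def]; exact ih.comp hf'

end Orbit

theorem Set.Finite.exists_pos_eq_of_dist_lt {M : Type*} [MetricSpace M] {P : Set M}
    (hP : P.Finite) : ∃ τ > 0, ∀ a ∈ P, ∀ b ∈ P, dist a b < τ → a = b := by
  have h : ∀ᶠ τ in 𝓝[>] (0 : ℝ), ∀ a ∈ P, ∀ b ∈ P, a ≠ b → τ < dist a b := by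
    refine (eventually_all_finite hP).2 fun a _ => (eventually_all_finite hP).2 fun b _ => ?_
    rcases eq_or_ne a b with rfl | hab
    · exact .of_forall fun _ h => absurd rfl h
    · exact (eventually_nhdsWithin_of_eventually_nhds
        (eventually_lt_nhds (dist_pos.2 hab))).mono fun _ h _ => h
  obtain ⟨τ, hτ, hτpos⟩ := (h.and self_mem_nhdsWithin).exists
  exact ⟨τ, hτpos, fun a ha b hb hab => by_contra fun hne => lt_asymm hab (hτ a ha b hb hne)⟩

section Unstable

variable {M : Type*} [MetricSpace M] {f : Equiv.Perm M} {p q : M}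

theorem mem_unstableSet_iff : q ∈ unstableSet f p ↔
    ∃ r ∈ orbitZ f p, Tendsto (fun k : ℤ => dist ((f ^ k) q) ((f ^ k) r)) atBot (𝓝 0) := by
  simp only [unstableSet, Set.mem_ofPred_eq, ← tendsto_comp_neg_atTop_iff,
    ← Nat.map_cast_int_atTop, tendsto_map'_iff]
  rfl

theorem zpow_apply_mem_unstableSet (hq : q ∈ unstableSet f p) (s : ℤ) :
    (f ^ s) q ∈ unstableSet f p := by
  obtain ⟨r, hr, h⟩ := mem_unstableSet_iff.1 hq
  refine mem_unstableSet_iff.2 ⟨(f ^ s) r, zpow_apply_mem_orbitZ hr s, ?_⟩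
  simpa only [zpow_apply_zpow_apply, Function.comp_def, id] using
    h.comp (tendsto_atBot_add_const_right _ s tendsto_id)

theorem mem_unstableSet_of_forall_le_mem_thickening {η : ℝ}
    (hloc : ∀ x : M, (∀ k : ℕ, (f ^ (-(k : ℤ))) x ∈ thickening η (orbitZ f p)) →
      x ∈ unstableSet f p)
    (K : ℤ) (h : ∀ k ≤ K, (f ^ k) q ∈ thickening η (orbitZ f p)) : q ∈ unstableSet f p := by
  have hK := hloc ((f ^ K) q) fun k => by rw [zpow_apply_zpow_apply]; exact h _ (by omega)
  simpa [zpow_apply_zpow_apply] using zpow_apply_mem_unstableSet hK (-K)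

end Unstable

section Shadowing

variable {M : Type*} [MetricSpace M] {f : Equiv.Perm M} {p q₁ q₂ r : M} {A B ε ε₀ ρ τ : ℝ}

theorem exists_pos_forall_dist_zpow_lt [CompactSpace M] (hf : Continuous f)
    (hf' : Continuous f.symm) (L : ℤ) {β : ℝ} (hβ : 0 < β) :
    ∃ δ > 0, ∀ a b : M, dist a b < δ → ∀ s : ℤ, |s| ≤ L → dist ((f ^ s) a) ((f ^ s) b) < β := by
  have h : ∀ᶠ ab in uniformity M, ∀ s ∈ Set.Icc (-L) L, dist ((f ^ s) ab.1) ((f ^ s) ab.2) < β :=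
    (eventually_all_finite (Set.finite_Icc _ _)).2 fun s _ =>
      CompactSpace.uniformContinuous_of_continuous (continuous_perm_zpow hf hf' s)
        (dist_mem_uniformity hβ)
  obtain ⟨δ, hδ, hδβ⟩ := mem_uniformity_dist.1 h
  exact ⟨δ, hδ, fun a b hab s hs => hδβ hab s (abs_le.1 hs)⟩

theorem dist_zpow_lt_of_dist_zpow_lt {β : ℝ} {L : ℤ}
    (hwin : ∀ a b : M, dist a b < ε → ∀ s : ℤ, |s| ≤ L → dist ((f ^ s) a) ((f ^ s) b) < β)
    {i k : ℤ} (h : dist ((f ^ i) q₁) ((f ^ i) q₂) < ε) (hk : |k - i| ≤ L) :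
    dist ((f ^ k) q₁) ((f ^ k) q₂) < β := by
  simpa [zpow_apply_zpow_apply] using hwin _ _ h (k - i) hk

def ShadowsPastNear (f : Equiv.Perm M) (p q₁ q₂ : M) (ε₀ ε : ℝ) : Prop :=
  ∀ k : ℤ, (f ^ k) q₂ ∈ thickening (ε₀ - ε) (orbitZ f p) →
    ∃ j : ℤ, j ≤ 1 ∧ dist ((f ^ k) q₂) ((f ^ j) q₁) < ε

theorem shadowsPastNear_of_subset_thickening {x : ℤ → M} (hx₁ : ∀ k ≤ 1, x k = (f ^ k) q₁)
    (hx₂ : ∀ k, 1 < k → x k ∉ thickening ε₀ (orbitZ f p))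
    (hq₂ : orbitZ f q₂ ⊆ thickening ε (Set.range x)) : ShadowsPastNear f p q₁ q₂ ε₀ ε := by
  intro k hk
  obtain ⟨_, ⟨j, rfl⟩, hj⟩ := mem_thickening_iff.1 (hq₂ ⟨k, rfl⟩)
  obtain ⟨w, hw, hkw⟩ := mem_thickening_iff.1 hk
  have hj₁ : j ≤ 1 := not_lt.1 fun h₁ => hx₂ j h₁ <| mem_thickening_iff.2 ⟨w, hw, by
    linarith [dist_triangle (x j) ((f ^ k) q₂) w, dist_comm (x j) ((f ^ k) q₂)]⟩
  exact ⟨j, hj₁, by rwa [← hx₁ j hj₁]⟩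

def IsTrappingScale (f : Equiv.Perm M) (p q₁ : M) (ε₀ ρ ε : ℝ) : Prop :=
  0 < ε ∧ ε < ε₀ ∧ ∀ q₂ : M, dist ((f ^ (1 : ℤ)) q₁) ((f ^ (1 : ℤ)) q₂) < ε →
    ShadowsPastNear f p q₁ q₂ ε₀ ε →
    (∃ K : ℤ, ∀ k ≤ K, (f ^ k) q₂ ∈ thickening ρ (orbitZ f p)) ∧
      ∀ k : ℤ, k ≤ 1 → dist ((f ^ k) q₁) ((f ^ k) q₂) ≤ ρ

theorem dist_zpow_lt_of_separated
    (hsep : ∀ a ∈ orbitZ f p, ∀ b ∈ orbitZ f p, dist a b < τ → a = b) (hr : r ∈ orbitZ f p)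
    {a : ℝ} {j k : ℤ} (hjr : dist ((f ^ j) q₁) ((f ^ j) r) ≤ a)
    (hkr : dist ((f ^ k) q₂) ((f ^ k) r) < B) (hkj : dist ((f ^ k) q₂) ((f ^ j) q₁) < ε)
    (hτ : a + ε + B ≤ τ) : dist ((f ^ k) q₂) ((f ^ k) r) < ε + a := by
  have hjk : (f ^ j) r = (f ^ k) r :=
    hsep _ (zpow_apply_mem_orbitZ hr j) _ (zpow_apply_mem_orbitZ hr k) <| by
      linarith [dist_triangle4 ((f ^ j) r) ((f ^ j) q₁) ((f ^ k) q₂) ((f ^ k) r),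
        dist_comm ((f ^ j) r) ((f ^ j) q₁), dist_comm ((f ^ j) q₁) ((f ^ k) q₂)]
  rw [hjk] at hjr
  linarith [dist_triangle ((f ^ k) q₂) ((f ^ j) q₁) ((f ^ k) r)]

theorem infDist_lt_of_dist_zpow_lt {β : ℝ} {L : ℤ}
    (hwin : ∀ a b : M, dist a b < ε → ∀ s : ℤ, |s| ≤ L → dist ((f ^ s) a) ((f ^ s) b) < β)
    (hr : r ∈ orbitZ f p) {j k : ℤ} (hj : |1 - j| ≤ L)
    (hkj : dist ((f ^ k) q₂) ((f ^ j) q₁) < ε)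
    (hr₂ : dist ((f ^ (k + 1 - j)) q₂) ((f ^ (k + 1 - j)) r) ≤ B) :
    infDist ((f ^ (1 : ℤ)) q₁) (orbitZ f p) < β + B := by
  have hw := hwin _ _ hkj (1 - j) hj
  rw [zpow_apply_zpow_apply, zpow_apply_zpow_apply, sub_add_cancel,
    show 1 - j + k = k + 1 - j by ring] at hw
  linarith [infDist_le_dist_of_mem (x := (f ^ (1 : ℤ)) q₁) (zpow_apply_mem_orbitZ hr (k + 1 - j)),
    dist_triangle ((f ^ (1 : ℤ)) q₁) ((f ^ (k + 1 - j)) q₂) ((f ^ (k + 1 - j)) r),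
    dist_comm ((f ^ (k + 1 - j)) q₂) ((f ^ (1 : ℤ)) q₁)]

theorem dist_zpow_lt_of_mem_orbitZ
    (hsep : ∀ a ∈ orbitZ f p, ∀ b ∈ orbitZ f p, dist a b < τ → a = b) (hq₁ : q₁ ∈ orbitZ f p)
    (hinv : ∀ a b : M, dist a b < ε → dist (f.symm a) (f.symm b) < B) (hτ : ε + B ≤ τ)
    (hε₀ : B ≤ ε₀ - ε) (h₁ : dist ((f ^ (1 : ℤ)) q₁) ((f ^ (1 : ℤ)) q₂) < ε)
    (hsnap : ShadowsPastNear f p q₁ q₂ ε₀ ε) :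
    ∀ k : ℤ, k ≤ 1 → dist ((f ^ k) q₂) ((f ^ k) q₁) < ε := by
  intro k hk
  induction k, hk using Int.leInductionDown with
  | base => rwa [dist_comm]
  | pred k hk ih =>
    have hB : dist ((f ^ (k - 1)) q₂) ((f ^ (k - 1)) q₁) < B := by
      simpa only [zpow_sub_one_apply] using hinv _ _ ih
    obtain ⟨j, -, hj⟩ := hsnap (k - 1)
      (mem_thickening_iff.2 ⟨_, zpow_apply_mem_orbitZ hq₁ _, hB.trans_le hε₀⟩)
    simpa using dist_zpow_lt_of_separated hsep hq₁ (dist_self _).le hB hj (by linarith)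

theorem exists_isTrappingScale_of_mem [CompactSpace M] (hf' : Continuous f.symm) (hτ : 0 < τ)
    (hsep : ∀ a ∈ orbitZ f p, ∀ b ∈ orbitZ f p, dist a b < τ → a = b) (hq₁ : q₁ ∈ orbitZ f p)
    (hε₀ : 0 < ε₀) (hρ : 0 < ρ) : ∃ ε, IsTrappingScale f p q₁ ε₀ ρ ε := by
  obtain ⟨B, hB, hBτ, hBε₀⟩ : ∃ B > 0, B ≤ τ / 2 ∧ B ≤ ε₀ / 2 :=
    ⟨min τ ε₀ / 2, by positivity, by linarith [min_le_left τ ε₀], by linarith [min_le_right τ ε₀]⟩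
  obtain ⟨δ, hδ, hinv⟩ := uniformContinuous_iff.1
    (CompactSpace.uniformContinuous_of_continuous hf') B hB
  obtain ⟨ε, hε, hεδ, hεB, hερ⟩ : ∃ ε > 0, ε < δ ∧ ε ≤ B / 2 ∧ ε < ρ :=
    ⟨min (min δ B) ρ / 2, by positivity,
      by linarith [min_le_left (min δ B) ρ, min_le_left δ B],
      by linarith [min_le_left (min δ B) ρ, min_le_right δ B],
      by linarith [min_le_right (min δ B) ρ]⟩
  refine ⟨ε, hε, by linarith, fun q₂ h₁ hsnap => ?_⟩
  have hclose := dist_zpow_lt_of_mem_orbitZ hsep hq₁ (fun a b h => hinv (by linarith))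
    (by linarith) (by linarith) h₁ hsnap
  refine ⟨⟨1, fun k hk => mem_thickening_iff.2 ⟨_, zpow_apply_mem_orbitZ hq₁ k, by
    linarith [hclose k hk]⟩⟩, fun k hk => ?_⟩
  rw [dist_comm]
  linarith [hclose k hk]

theorem dist_zpow_le_of_le_infDist {K : ℤ} (hK : K ≤ 1)
    (hsep : ∀ a ∈ orbitZ f p, ∀ b ∈ orbitZ f p, dist a b < τ → a = b) (hr : r ∈ orbitZ f p)
    (htail : ∀ k ≤ K, dist ((f ^ k) q₁) ((f ^ k) r) < A / 2)
    (hinv : ∀ a b : M, dist a b ≤ A → dist (f.symm a) (f.symm b) < B)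
    (hwin : ∀ a b : M, dist a b < ε → ∀ s : ℤ, |s| ≤ 2 * (1 - K) →
      dist ((f ^ s) a) ((f ^ s) b) < A / 2)
    (hεA : ε ≤ A / 2) (hAB : A ≤ B) (hτ : A / 2 + ε + B ≤ τ) (hε₀ : B ≤ ε₀ - ε)
    (hμ : A / 2 + B ≤ infDist ((f ^ (1 : ℤ)) q₁) (orbitZ f p))
    (h₁ : dist ((f ^ (1 : ℤ)) q₁) ((f ^ (1 : ℤ)) q₂) < ε)
    (hsnap : ShadowsPastNear f p q₁ q₂ ε₀ ε) :
    ∀ k ≤ K, dist ((f ^ k) q₂) ((f ^ k) r) ≤ A := by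
  have hbase (k : ℤ) (hk : 2 * K - 1 ≤ k) (hkK : k ≤ K) : dist ((f ^ k) q₂) ((f ^ k) r) ≤ A := by
    have := dist_zpow_lt_of_dist_zpow_lt hwin h₁ (k := k) (abs_le.2 ⟨by omega, by omega⟩)
    linarith [dist_triangle ((f ^ k) q₂) ((f ^ k) q₁) ((f ^ k) r), htail k hkK,
      dist_comm ((f ^ k) q₁) ((f ^ k) q₂)]
  suffices ∀ k ≤ K, ∀ i, k ≤ i → i ≤ K → dist ((f ^ i) q₂) ((f ^ i) r) ≤ A from
    fun k hk => this k hk k le_rfl hk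
  intro k hk
  induction k, hk using Int.leInductionDown with
  | base => intro i hi hiK; exact hbase i (by omega) hiK
  | pred k hk ih =>
    intro i hi hiK
    rcases hi.lt_or_eq with hi | rfl
    · exact ih i (by omega) hiK
    rcases le_or_gt (2 * K - 1) (k - 1) with hk' | hdeep
    · exact hbase _ hk' hiK
    have hB : dist ((f ^ (k - 1)) q₂) ((f ^ (k - 1)) r) < B := by
      simpa only [zpow_sub_one_apply] using hinv _ _ (ih k le_rfl hk)
    obtain ⟨j, hj₁, hj⟩ := hsnap (k - 1)
      (mem_thickening_iff.2 ⟨_, zpow_apply_mem_orbitZ hr _, hB.trans_le hε₀⟩)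
    rcases le_or_gt j K with hjK | hjK
    · linarith [dist_zpow_lt_of_separated hsep hr (htail j hjK).le hB hj (by linarith)]
    · have hr₂ : dist ((f ^ (k - 1 + 1 - j)) q₂) ((f ^ (k - 1 + 1 - j)) r) ≤ B := by
        rcases hj₁.lt_or_eq with hj₁ | rfl
        · exact (ih _ (by omega) (by omega)).trans hAB
        · simpa using hB.le
      linarith [infDist_lt_of_dist_zpow_lt hwin hr (abs_le.2 ⟨by omega, by omega⟩) hj hr₂]

theorem exists_isTrappingScale_of_not_mem [CompactSpace M] (hf : Continuous f)
    (hf' : Continuous f.symm) (hτ : 0 < τ)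
    (hsep : ∀ a ∈ orbitZ f p, ∀ b ∈ orbitZ f p, dist a b < τ → a = b)
    (hP : (orbitZ f p).Finite) (hr : r ∈ orbitZ f p)
    (htail : Tendsto (fun k : ℤ => dist ((f ^ k) q₁) ((f ^ k) r)) atBot (𝓝 0))
    (hq₁ : q₁ ∉ orbitZ f p) (hε₀ : 0 < ε₀) (hρ : 0 < ρ) : ∃ ε, IsTrappingScale f p q₁ ε₀ ρ ε := by
  set μ := infDist ((f ^ (1 : ℤ)) q₁) (orbitZ f p)
  have hμ : 0 < μ :=
    (hP.isClosed.notMem_iff_infDist_pos ⟨r, hr⟩).1 ((zpow_apply_mem_orbitZ_iff 1).not.2 hq₁)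
  obtain ⟨B, hB, hBμ, hBε₀, hBτ⟩ : ∃ B > 0, B ≤ μ / 2 ∧ B ≤ ε₀ / 2 ∧ B ≤ τ / 2 :=
    ⟨min (min μ ε₀) τ / 2, by positivity,
      by linarith [min_le_left (min μ ε₀) τ, min_le_left μ ε₀],
      by linarith [min_le_left (min μ ε₀) τ, min_le_right μ ε₀],
      by linarith [min_le_right (min μ ε₀) τ]⟩
  obtain ⟨δ, hδ, hinv⟩ := uniformContinuous_iff.1
    (CompactSpace.uniformContinuous_of_continuous hf') B hB
  obtain ⟨A, hA, hAδ, hAB, hAρ⟩ : ∃ A > 0, A < δ ∧ A ≤ B ∧ A ≤ ρ / 2 :=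
    ⟨min (min δ B) ρ / 2, by positivity,
      by linarith [min_le_left (min δ B) ρ, min_le_left δ B],
      by linarith [min_le_left (min δ B) ρ, min_le_right δ B],
      by linarith [min_le_right (min δ B) ρ]⟩
  obtain ⟨K₀, hK₀⟩ := eventually_atBot.1 (htail.eventually (gt_mem_nhds (half_pos hA)))
  set K := min K₀ 1
  have htail' (k : ℤ) (hk : k ≤ K) := hK₀ k (hk.trans (min_le_left _ _))
  obtain ⟨ε', hε', hwin⟩ := exists_pos_forall_dist_zpow_lt hf hf' (2 * (1 - K)) (half_pos hA)
  set ε := min ε' (A / 2)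
  have hεA : ε ≤ A / 2 := min_le_right _ _
  have hwin' (a b : M) (h : dist a b < ε) := hwin a b (h.trans_le (min_le_left _ _))
  refine ⟨ε, by positivity, by linarith, fun q₂ h₁ hsnap => ?_⟩
  have htrap := dist_zpow_le_of_le_infDist (min_le_right _ _) hsep hr htail'
    (fun a b h => hinv (h.trans_lt hAδ)) hwin' hεA hAB (by linarith) (by linarith) (by linarith)
    h₁ hsnap
  refine ⟨⟨K, fun k hk => mem_thickening_iff.2 ⟨_, zpow_apply_mem_orbitZ hr k,
    (htrap k hk).trans_lt (by linarith)⟩⟩, fun k hk => ?_⟩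
  rcases le_or_gt K k with hKk | hkK
  · have := dist_zpow_lt_of_dist_zpow_lt hwin' h₁ (k := k) (abs_le.2 ⟨by omega, by omega⟩)
    linarith
  · linarith [htail' k hkK.le, htrap k hkK.le, dist_comm ((f ^ k) q₂) ((f ^ k) r),
      dist_triangle ((f ^ k) q₁) ((f ^ k) r) ((f ^ k) q₂)]

end Shadowing

theorem orbital_shadowing_forces_unstable_manifold_general
    {M : Type*} [MetricSpace M] [CompactSpace M]
    (f : Equiv.Perm M) (hf : Continuous (⇑f)) (hf' : Continuous (⇑f.symm))
    (p : M) (m : ℕ) (hm : 0 < m) (hp : (f ^ m) p = p)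
    (η : ℝ) (hη : 0 < η)
    (hloc : ∀ x : M, (∀ k : ℕ, (f ^ (-(k : ℤ))) x ∈ thickening η (orbitZ f p)) →
      x ∈ unstableSet f p)
    (q1 : M) (hq1 : q1 ∈ unstableSet f p)
    (R ε₀ : ℝ) (hR : 0 < R) (hε₀ : 0 < ε₀) :
    ∃ ε : ℝ, 0 < ε ∧ ε < ε₀ ∧
      ∀ x : ℤ → M,
        (∀ k : ℤ, k ≤ 1 → x k = (f ^ k) q1) →
        (∀ k : ℤ, 1 < k → x k ∉ thickening ε₀ (orbitZ f p)) →
        ∀ q2 : M,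
          dist ((f ^ (1 : ℤ)) q1) ((f ^ (1 : ℤ)) q2) < ε →
          (∀ k : ℤ, x k ∈ thickening ε (orbitZ f q2)) →
          orbitZ f q2 ⊆ thickening ε (Set.range x) →
          q2 ∈ unstableSet f p ∧ ∀ k : ℤ, k ≤ 1 → dist ((f ^ k) q1) ((f ^ k) q2) ≤ R := by
  obtain ⟨r, hr, htail⟩ := mem_unstableSet_iff.1 hq1
  have hP := orbitZ_finite hm hp
  obtain ⟨τ, hτ, hsep⟩ := hP.exists_pos_eq_of_dist_lt
  have hρ : 0 < min η R := lt_min hη hR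
  obtain ⟨ε, hε, hεε₀, htrap⟩ : ∃ ε, IsTrappingScale f p q1 ε₀ (min η R) ε := by
    by_cases hq : q1 ∈ orbitZ f p
    · exact exists_isTrappingScale_of_mem hf' hτ hsep hq hε₀ hρ
    · exact exists_isTrappingScale_of_not_mem hf hf' hτ hsep hP hr htail hq hε₀ hρ
  refine ⟨ε, hε, hεε₀, fun x hx₁ hx₂ q2 h₁ _ hx₅ => ?_⟩
  obtain ⟨⟨K, hK⟩, hq1q2⟩ := htrap q2 h₁ (shadowsPastNear_of_subset_thickening hx₁ hx₂ hx₅)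
  exact ⟨mem_unstableSet_of_forall_le_mem_thickening hloc K fun k hk =>
      thickening_mono (min_le_left _ _) _ (hK k hk),
    fun k hk => (hq1q2 k hk).trans (min_le_right _ _)⟩

/-- Corollary of the Main Lemma: any exact trajectory orbitally shadowing a
pseudotrajectory that follows `O(q¹,f)` (with `q¹ ∈ W^u(p)`) for times `k ≤ 1` and stays
away from `O(p,f)` for times `k > 1` must lie in `W^u(p)` and stay `R`-close to `O(q¹,f)`
at times `k ≤ 1`. -/
theorem orbital_shadowing_forces_unstable_manifold
    {M : Type*} [MetricSpace M] [CompactSpace M]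
    (f : Equiv.Perm M) (hf : Continuous (⇑f)) (hf' : Continuous (⇑f.symm))
    (p : M) (m : ℕ) (hm : 0 < m) (hp : (f ^ m) p = p)
    (η : ℝ) (hη : 0 < η)
    (hloc : ∀ x : M, (∀ k : ℕ, (f ^ (-(k : ℤ))) x ∈ thickening η (orbitZ f p)) →
      x ∈ unstableSet f p)
    (q1 : M) (hq1 : q1 ∈ unstableSet f p)
    (R ε₀ : ℝ) (hR : 0 < R) (hε₀ : 0 < ε₀) (hε₀R : ε₀ < R / 2) :
    ∃ ε : ℝ, 0 < ε ∧ ε < ε₀ ∧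
      ∀ x : ℤ → M,
        (∀ k : ℤ, k ≤ 1 → x k = (f ^ k) q1) →
        (∀ k : ℤ, 1 < k → x k ∉ thickening ε₀ (orbitZ f p)) →
        ∀ q2 : M,
          dist ((f ^ (1 : ℤ)) q1) ((f ^ (1 : ℤ)) q2) < ε →
          (∀ k : ℤ, x k ∈ thickening ε (orbitZ f q2)) →
          orbitZ f q2 ⊆ thickening ε (Set.range x) →
          q2 ∈ unstableSet f p ∧ ∀ k : ℤ, k ≤ 1 → dist ((f ^ k) q1) ((f ^ k) q2) ≤ R :=
  orbital_shadowing_forces_unstable_manifold_general f hf hf' p m hm hp η hη hloc q1 hq1 R ε₀ hR hε₀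
end
end

section
/- Let p be a periodic point of the Bernoulli shift σ on Σ². Then there exists ε₁ > 0 such that every x ∈ Σ² whose positive semitrajectory O₊(x,σ) is contained in N(ε₁, O(p,σ)) belongs to W^s(p). -/
/-!
If every `σᵏ x` is `2⁻ᵀ`-close to some `σ^(n k) p`, then `σᵏ x` agrees with `σ^(n k) p` on the
coordinates `-T-1, …, T`. The windows seen at times `k` and `k + 1` overlap in `T` consecutive
coordinates, and a `T`-periodic sequence is determined by `T` consecutive values, so
`σ^(n (k+1)) p = σ^(n k + 1) p`. Hence `x` agrees with `σ^(n 0) p` on all nonnegative coordinates,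
and `d(σᵏ x, σᵏ σ^(n 0) p) ≤ 2⁻ᵏ`.
-/

open Filter

noncomputable section

/-- `shiftZ n ω` is the `n`-th iterate `σⁿ ω` of the Bernoulli shift `(σω)_k = ω_{k+1}`. -/
def shiftZ (n : ℤ) (ω : ℤ → Bool) : ℤ → Bool := fun k => ω (k + n)

/-- The metric on `Σ²`. -/
def dSigma (ω ω' : ℤ → Bool) : ℝ :=
  sSup ((fun k : ℕ => (2 : ℝ) ^ (-(k : ℤ))) ''
    {k : ℕ | ω (-(k : ℤ) - 1) ≠ ω' (-(k : ℤ) - 1) ∨ ω (k : ℤ) ≠ ω' (k : ℤ)})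

/-- The orbit `O(ω,σ) = {σᵏω : k ∈ ℤ}`. -/
def orbitShift (ω : ℤ → Bool) : Set (ℤ → Bool) := Set.range fun n : ℤ => shiftZ n ω

/-- The stable set `W^s(p)` of a periodic point of the Bernoulli shift. -/
def stableSetShift (p : ℤ → Bool) : Set (ℤ → Bool) :=
  {q | ∃ r ∈ orbitShift p,
    Tendsto (fun k : ℕ => dSigma (shiftZ (k : ℤ) q) (shiftZ (k : ℤ) r)) atTop (nhds 0)}

open Function Set Topology

theorem Function.Periodic.eq_of_eqOn_Ico {α β : Type*} [AddCommGroup α] [LinearOrder α]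
    [IsOrderedAddMonoid α] [Archimedean α] {f g : α → β} {c : α}
    (hf : Periodic f c) (hg : Periodic g c) (hc : 0 < c) (h : EqOn f g (Ico 0 c)) : f = g := by
  funext x
  obtain ⟨n, hn, -⟩ := existsUnique_zsmul_near_of_pos' hc x
  rw [← hf.sub_zsmul_eq n, ← hg.sub_zsmul_eq n, h hn]

@[simp]
theorem shiftZ_apply (n : ℤ) (ω : ℤ → Bool) (k : ℤ) : shiftZ n ω k = ω (k + n) := rfl

theorem shiftZ_shiftZ (m n : ℤ) (ω : ℤ → Bool) : shiftZ m (shiftZ n ω) = shiftZ (m + n) ω := by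
  funext k
  simp only [shiftZ_apply, add_assoc]

theorem Function.Periodic.shiftZ {p : ℤ → Bool} {c : ℤ} (hp : Periodic p c) (n : ℤ) :
    Periodic (shiftZ n p) c :=
  hp.add_const n

theorem dSigma_nonneg (ω ω' : ℤ → Bool) : 0 ≤ dSigma ω ω' := by
  apply Real.sSup_nonneg
  rintro x ⟨k, -, rfl⟩
  positivity

section dSigma

variable {ω ω' : ℤ → Bool}

theorem two_zpow_le_dSigma {k : ℕ}
    (hk : ω (-(k : ℤ) - 1) ≠ ω' (-(k : ℤ) - 1) ∨ ω k ≠ ω' k) :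
    (2 : ℝ) ^ (-(k : ℤ)) ≤ dSigma ω ω' := by
  refine le_csSup ⟨1, ?_⟩ ⟨k, hk, rfl⟩
  rintro x ⟨j, -, rfl⟩
  exact zpow_le_one_of_nonpos₀ one_le_two (by omega)

theorem eq_of_dSigma_lt_two_zpow {m : ℕ} (h : dSigma ω ω' < (2 : ℝ) ^ (-(m : ℤ))) {j : ℤ}
    (hj₁ : -(m : ℤ) - 1 ≤ j) (hj₂ : j ≤ m) : ω j = ω' j := by
  by_contra hne
  obtain ⟨k, hkm, hk⟩ : ∃ k : ℕ, (k : ℤ) ≤ m ∧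
      (ω (-(k : ℤ) - 1) ≠ ω' (-(k : ℤ) - 1) ∨ ω k ≠ ω' k) := by
    rcases le_or_gt 0 j with hj | hj
    · exact ⟨j.toNat, by omega, Or.inr (by rwa [Int.toNat_of_nonneg hj])⟩
    · refine ⟨(-j - 1).toNat, by omega, Or.inl ?_⟩
      rwa [show -((-j - 1).toNat : ℤ) - 1 = j by omega]
  have hk_le := two_zpow_le_dSigma hk
  have hmk : (2 : ℝ) ^ (-(m : ℤ)) ≤ (2 : ℝ) ^ (-(k : ℤ)) :=
    zpow_le_zpow_right₀ one_le_two (by omega)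
  linarith

theorem dSigma_le_two_zpow_of_eq {K : ℕ} (h : ∀ j : ℤ, -(K : ℤ) ≤ j → ω j = ω' j) :
    dSigma ω ω' ≤ (2 : ℝ) ^ (-(K : ℤ)) := by
  refine Real.sSup_le ?_ (by positivity)
  rintro x ⟨k, hk, rfl⟩
  have hKk : K ≤ k := by
    by_contra! hlt
    exact hk.elim (· (h _ (by omega))) (· (h _ (by omega)))
  exact zpow_le_zpow_right₀ one_le_two (by omega)

end dSigma

theorem tendsto_dSigma_shiftZ_of_eqOn_Ici {x y : ℤ → Bool} (h : EqOn x y (Ici 0)) :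
    Tendsto (fun k : ℕ => dSigma (shiftZ k x) (shiftZ k y)) atTop (𝓝 0) := by
  have hgeom : Tendsto (fun k : ℕ => (2 : ℝ) ^ (-(k : ℤ))) atTop (𝓝 0) := by
    simp only [zpow_neg, zpow_natCast, ← inv_pow]
    exact tendsto_pow_atTop_nhds_zero_of_lt_one (by norm_num) (by norm_num)
  refine squeeze_zero (fun k => dSigma_nonneg _ _) (fun k => ?_) hgeom
  exact dSigma_le_two_zpow_of_eq fun j hj => h (mem_Ici.2 (by omega))

section PeriodicShadow

variable {p : ℤ → Bool} {T : ℕ}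

theorem shiftZ_eq_shiftZ_add_one_of_dSigma_lt (hT : 0 < T) (hp : Periodic p T) {y : ℤ → Bool}
    {a b : ℤ} (ha : dSigma y (shiftZ a p) < (2 : ℝ) ^ (-(T : ℤ)))
    (hb : dSigma (shiftZ 1 y) (shiftZ b p) < (2 : ℝ) ^ (-(T : ℤ))) :
    shiftZ b p = shiftZ (a + 1) p := by
  refine (hp.shiftZ b).eq_of_eqOn_Ico (hp.shiftZ (a + 1)) (by exact_mod_cast hT) ?_
  rintro j ⟨hj₀, hjT⟩
  have hb' := eq_of_dSigma_lt_two_zpow hb (j := j) (by omega) (by omega)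
  have ha' := eq_of_dSigma_lt_two_zpow ha (j := j + 1) (by omega) (by omega)
  simp only [shiftZ_apply] at ha' hb' ⊢
  rw [← hb', ha', add_assoc, add_comm 1 a]

theorem shiftZ_eq_shiftZ_add_of_forall_dSigma_lt (hT : 0 < T) (hp : Periodic p T)
    {x : ℤ → Bool} {n : ℕ → ℤ}
    (hn : ∀ k : ℕ, dSigma (shiftZ k x) (shiftZ (n k) p) < (2 : ℝ) ^ (-(T : ℤ))) (k : ℕ) :
    shiftZ (n k) p = shiftZ (n 0 + k) p := by
  induction k with
  | zero => simp
  | succ k ih =>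
    have hk1 := hn (k + 1)
    rw [Nat.cast_succ, add_comm, ← shiftZ_shiftZ] at hk1
    rw [shiftZ_eq_shiftZ_add_one_of_dSigma_lt hT hp (hn k) hk1, add_comm, ← shiftZ_shiftZ, ih,
      shiftZ_shiftZ, Nat.cast_succ, add_comm, add_assoc]

theorem exists_eqOn_Ici_shiftZ_of_forall_dSigma_lt (hT : 0 < T) (hp : Periodic p T)
    {x : ℤ → Bool}
    (hx : ∀ k : ℕ, ∃ r ∈ orbitShift p, dSigma (shiftZ k x) r < (2 : ℝ) ^ (-(T : ℤ))) :
    ∃ a : ℤ, EqOn x (shiftZ a p) (Ici 0) := by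
  choose r hr hlt using hx
  choose n hn using hr
  simp only [← hn] at hlt
  refine ⟨n 0, fun i (hi : 0 ≤ i) => ?_⟩
  lift i to ℕ using hi
  have := eq_of_dSigma_lt_two_zpow (hlt i) (j := 0) (by omega) (by omega)
  rw [shiftZ_eq_shiftZ_add_of_forall_dSigma_lt hT hp hlt i] at this
  simpa [add_comm] using this

end PeriodicShadow

/-- For a periodic point `p` of the Bernoulli shift there is `ε₁ > 0` such that any point
whose positive semitrajectory stays in the `ε₁`-neighborhood of `O(p,σ)` lies in `W^s(p)`. -/
theorem shift_local_stable_characterization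
    (p : ℤ → Bool) (T : ℕ) (hT : 0 < T) (hp : shiftZ (T : ℤ) p = p) :
    ∃ ε₁ : ℝ, 0 < ε₁ ∧
      ∀ x : ℤ → Bool,
        (∀ k : ℕ, ∃ r ∈ orbitShift p, dSigma (shiftZ (k : ℤ) x) r < ε₁) →
        x ∈ stableSetShift p := by
  have hper : Periodic p T := fun i => congrFun hp i
  refine ⟨(2 : ℝ) ^ (-(T : ℤ)), by positivity, fun x hx => ?_⟩
  obtain ⟨a, ha⟩ := exists_eqOn_Ici_shiftZ_of_forall_dSigma_lt hT hper hx
  exact ⟨shiftZ a p, ⟨a, rfl⟩, tendsto_dSigma_shiftZ_of_eqOn_Ici ha⟩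
end
end

section
/- Let σ be the Bernoulli shift on Σ², let r₁ and r₂ be periodic points of σ with disjoint orbits, and let q¹ ∈ W^u(r₁) ∩ W^s(r₂) with q¹ ∉ O(r₁,σ) ∪ O(r₂,σ). Then for every R > 0 there exists ε > 0 such that: for every point q² ∈ W^u(r₁) ∩ W^s(r₂) satisfying d_{Σ²}(σ(q¹), σ(q²)) < ε, O(q¹,σ) ⊂ N(ε, O(q²,σ)) and O(q²,σ) ⊂ N(ε, O(q¹,σ)), one has d_{Σ²}(σ^k(q¹), σ^k(q²)) ≤ R for all k ∈ ℤ. -/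
open Filter

noncomputable section

/-- The unstable set `W^u(p)` of a periodic point of the Bernoulli shift. -/
def unstableSetShift (p : ℤ → Bool) : Set (ℤ → Bool) :=
  {q | ∃ r ∈ orbitShift p,
    Tendsto (fun k : ℕ => dSigma (shiftZ (-(k : ℤ)) q) (shiftZ (-(k : ℤ)) r)) atTop (nhds 0)}

lemma dSigma_bddAbove (ω ω' : ℤ → Bool) :
    BddAbove ((fun k : ℕ => (2 : ℝ) ^ (-(k : ℤ))) ''
      {k : ℕ | ω (-(k : ℤ) - 1) ≠ ω' (-(k : ℤ) - 1) ∨ ω (k : ℤ) ≠ ω' (k : ℤ)}) := by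
  refine ⟨1, ?_⟩
  rintro x ⟨k, -, rfl⟩
  apply zpow_le_one_of_nonpos₀ one_le_two
  omega

lemma le_dSigma_of_ne (ω ω' : ℤ → Bool) (n : ℕ) (j : ℤ)
    (h1 : -(n:ℤ) - 1 ≤ j) (h2 : j ≤ (n:ℤ)) (hne : ω j ≠ ω' j) :
    (2:ℝ)^(-(n:ℤ)) ≤ dSigma ω ω' := by
  by_cases h : 0 ≤ j
  · have hkn : (j.toNat : ℤ) ≤ (n:ℤ) := by omega
    have hmem : j.toNat ∈ {k : ℕ | ω (-(k : ℤ) - 1) ≠ ω' (-(k : ℤ) - 1) ∨ ω (k : ℤ) ≠ ω' (k : ℤ)} := by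
      right; rwa [Int.toNat_of_nonneg h]
    calc (2:ℝ)^(-(n:ℤ)) ≤ (2:ℝ)^(-(j.toNat:ℤ)) := by
          apply zpow_le_zpow_right₀ one_le_two; omega
      _ ≤ dSigma ω ω' := le_csSup (dSigma_bddAbove ω ω') ⟨j.toNat, hmem, rfl⟩
  · push_neg at h
    have hkn : ((-j-1).toNat : ℤ) ≤ (n:ℤ) := by omega
    have hj : -((((-j-1).toNat) : ℤ)) - 1 = j := by omega
    have hmem : (-j-1).toNat ∈ {k : ℕ | ω (-(k : ℤ) - 1) ≠ ω' (-(k : ℤ) - 1) ∨ ω (k : ℤ) ≠ ω' (k : ℤ)} := by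
      left; rwa [hj]
    calc (2:ℝ)^(-(n:ℤ)) ≤ (2:ℝ)^(-(((-j-1).toNat):ℤ)) := by
          apply zpow_le_zpow_right₀ one_le_two; omega
      _ ≤ dSigma ω ω' := le_csSup (dSigma_bddAbove ω ω') ⟨(-j-1).toNat, hmem, rfl⟩

lemma agree_of_dSigma_lt (ω ω' : ℤ → Bool) (n : ℕ)
    (h : dSigma ω ω' < (2:ℝ)^(-(n:ℤ))) :
    ∀ j : ℤ, -(n:ℤ) - 1 ≤ j → j ≤ (n:ℤ) → ω j = ω' j := by
  intro j h1 h2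
  by_contra hne
  exact absurd (le_dSigma_of_ne ω ω' n j h1 h2 hne) (not_le.2 h)

lemma dSigma_self (ω : ℤ → Bool) : dSigma ω ω = 0 := by
  have h : {k : ℕ | ω (-(k : ℤ) - 1) ≠ ω (-(k : ℤ) - 1) ∨ ω (k : ℤ) ≠ ω (k : ℤ)} = ∅ := by
    ext k; simp
  rw [dSigma, h, Set.image_empty, Real.sSup_empty]

lemma tail_right (q r : ℤ → Bool)
    (h : Tendsto (fun k : ℕ => dSigma (shiftZ (k : ℤ) q) (shiftZ (k : ℤ) r)) atTop (nhds 0)) :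
    ∃ K : ℕ, ∀ x : ℤ, (K:ℤ) ≤ x → q x = r x := by
  obtain ⟨K, hK⟩ := eventually_atTop.1 (h.eventually_lt_const one_pos)
  refine ⟨K, fun x hx => ?_⟩
  have hx0 : 0 ≤ x := le_trans (Int.ofNat_nonneg K) hx
  have hk : dSigma (shiftZ (x.toNat : ℤ) q) (shiftZ (x.toNat : ℤ) r) < (2:ℝ)^(-((0:ℕ):ℤ)) := by
    simpa using hK x.toNat (by omega)
  have := agree_of_dSigma_lt _ _ 0 hk 0 (by norm_num) (by norm_num)
  have h3 : q ((0:ℤ) + (x.toNat:ℤ)) = r ((0:ℤ) + (x.toNat:ℤ)) := this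
  rwa [show (0:ℤ) + (x.toNat:ℤ) = x by omega] at h3

lemma tail_left (q r : ℤ → Bool)
    (h : Tendsto (fun k : ℕ => dSigma (shiftZ (-(k : ℤ)) q) (shiftZ (-(k : ℤ)) r)) atTop (nhds 0)) :
    ∃ K : ℕ, ∀ x : ℤ, x ≤ -(K:ℤ) → q x = r x := by
  obtain ⟨K, hK⟩ := eventually_atTop.1 (h.eventually_lt_const one_pos)
  refine ⟨K, fun x hx => ?_⟩
  have hx0 : x ≤ 0 := by omega
  have hk : dSigma (shiftZ (-((-x).toNat : ℤ)) q) (shiftZ (-((-x).toNat : ℤ)) r) < (2:ℝ)^(-((0:ℕ):ℤ)) := by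
    simpa using hK (-x).toNat (by omega)
  have := agree_of_dSigma_lt _ _ 0 hk 0 (by norm_num) (by norm_num)
  have h3 : q ((0:ℤ) + -((-x).toNat:ℤ)) = r ((0:ℤ) + -((-x).toNat:ℤ)) := this
  rwa [show (0:ℤ) + -((-x).toNat:ℤ) = x by omega] at h3

lemma orbit_period (r₁ r : ℤ → Bool) (T : ℕ) (hr : shiftZ (T:ℤ) r₁ = r₁)
    (h : r ∈ orbitShift r₁) : ∀ x, r (x + (T:ℤ)) = r x := by
  obtain ⟨m, rfl⟩ := h
  intro x
  have h2 := congrFun hr (x + m)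
  show r₁ (x + (T:ℤ) + m) = r₁ (x + m)
  rw [show x + (T:ℤ) + m = x + m + (T:ℤ) by ring]
  exact h2

lemma period_mul (p : ℤ → Bool) (P : ℤ) (hp : ∀ x, p (x + P) = p x) :
    ∀ m : ℕ, ∀ x, p (x + P * (m:ℤ)) = p x := by
  intro m
  induction m with
  | zero => intro x; simp
  | succ k ih =>
    intro x
    have h : x + P * ((k:ℤ)+1) = (x + P * (k:ℤ)) + P := by ring
    rw [show ((k+1:ℕ):ℤ) = (k:ℤ)+1 by push_cast; ring, h, hp, ih]

lemma period_dvd (p : ℤ → Bool) (P : ℤ) (hp : ∀ x, p (x + P) = p x)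
    (x y : ℤ) (h : P ∣ y - x) : p y = p x := by
  obtain ⟨m, hm⟩ := h
  rcases le_or_gt 0 m with hm0 | hm0
  · have hy : y = x + P * (m.toNat : ℤ) := by rw [Int.toNat_of_nonneg hm0]; linarith
    rw [hy, period_mul p P hp]
  · have hx : x = y + P * (((-m).toNat) : ℤ) := by
      rw [Int.toNat_of_nonneg (by omega : (0:ℤ) ≤ -m)]
      have : P * -m = -(P * m) := by ring
      rw [this]; linarith
    rw [hx, period_mul p P hp]

lemma periodic_ext (p p' : ℤ → Bool) (P : ℤ) (hP : 0 < P)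
    (hp : ∀ x, p (x + P) = p x) (hp' : ∀ x, p' (x + P) = p' x)
    (u : ℤ) (h : ∀ y, u ≤ y → y ≤ u + P - 1 → p y = p' y) :
    ∀ y, p y = p' y := by
  intro y
  obtain ⟨r, qq, hr0, hrP, hq⟩ : ∃ r qq : ℤ, 0 ≤ r ∧ r < P ∧ y - u = P * qq + r :=
    ⟨(y-u) % P, (y-u) / P, Int.emod_nonneg _ hP.ne', Int.emod_lt_of_pos _ hP,
      ((Int.mul_ediv_add_emod (y-u) P).symm)⟩
  have hd : P ∣ y - (u + r) := ⟨qq, by linarith⟩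
  rw [period_dvd p P hp (u + r) y hd, period_dvd p' P hp' (u + r) y hd]
  exact h (u + r) (by omega) (by omega)

lemma lemR (q p₁ p₂ : ℤ → Bool) (K P : ℤ) (hK : 0 ≤ K) (hP : 0 < P)
    (hp₁ : ∀ x, p₁ (x + P) = p₁ x) (hp₂ : ∀ x, p₂ (x + P) = p₂ x)
    (hql : ∀ x, x ≤ -K → q x = p₁ x) (hqr : ∀ x, K ≤ x → q x = p₂ x)
    (hdis : ∀ s : ℤ, ∃ x, p₁ x ≠ p₂ (x + s))
    (t a b : ℤ) (hrep : ∀ x, a ≤ x → x ≤ b → q (x + t) = q x)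
    (hbK : K ≤ b) (hlen : 2*K + 2*P ≤ b - max a K + 1) :
    q (b + 1 + t) = q (b + 1) := by
  set a' := max a K with ha'
  have ha'K : K ≤ a' := le_max_right _ _
  have ha'a : a ≤ a' := le_max_left _ _
  have ha'b : a' ≤ b := by omega
  have hq_eq : ∀ y, a' + t ≤ y → y ≤ b + t → q y = p₂ (y - t) := by
    intro y h1 h2
    have h3 : q ((y - t) + t) = q (y - t) := hrep _ (by omega) (by omega)
    have h4 : q (y - t) = p₂ (y - t) := hqr _ (by omega)
    have e : q y = q ((y - t) + t) := congrArg q (by ring)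
    exact e.trans (h3.trans h4)
  by_cases hL : a' + t ≤ -K - P + 1
  · exfalso
    obtain ⟨x₀, hx₀⟩ := hdis (-t)
    obtain ⟨r, qq, hr0, hrP, hq⟩ : ∃ r qq : ℤ, 0 ≤ r ∧ r < P ∧ x₀ - (a'+t) = P * qq + r :=
      ⟨_, _, Int.emod_nonneg _ hP.ne', Int.emod_lt_of_pos _ hP,
        ((Int.mul_ediv_add_emod (x₀ - (a'+t)) P).symm)⟩
    set x := a' + t + r with hx
    have hdvd : P ∣ x - x₀ := ⟨-qq, by rw [hx]; linear_combination -hq⟩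
    have hx_le : x ≤ -K := by omega
    have e1 : q x = p₁ x₀ := by
      rw [hql x hx_le]; exact period_dvd p₁ P hp₁ x₀ x hdvd
    have e2 : q x = p₂ (x₀ + -t) := by
      rw [hq_eq x (by omega) (by omega)]
      exact period_dvd p₂ P hp₂ (x₀ + -t) (x - t)
        (by rw [show (x - t) - (x₀ + -t) = x - x₀ by ring]; exact hdvd)
    exact hx₀ (by rw [← e1, e2])
  · push_neg at hL
    set u := max (a' + t) K with hu
    have hu1 : a' + t ≤ u := le_max_left _ _
    have hu2 : K ≤ u := le_max_right _ _
    have hu3 : u = a' + t ∨ u = K := max_choice _ _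
    have hub : u + P - 1 ≤ b + t := by omega
    have hkey : ∀ y, p₂ y = p₂ (y - t) := by
      apply periodic_ext p₂ (fun y => p₂ (y - t)) P hP hp₂
        (fun y => by
          have h := hp₂ (y - t)
          rw [show (y - t) + P = y + P - t by ring] at h
          exact h) u
      intro y hy1 hy2
      have hyK : K ≤ y := le_trans hu2 hy1
      rw [← hqr y hyK]
      exact hq_eq y (by omega) (by omega)
    have hMK : K ≤ b + t := by omega
    calc q (b+1+t) = p₂ (b+1+t) := hqr _ (by omega)
      _ = p₂ (b+1+t - t) := hkey (b+1+t)
      _ = q (b+1) := by rw [show b+1+t-t = b+1 by ring, hqr _ (by omega)]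

lemma lemL (q p₁ p₂ : ℤ → Bool) (K P : ℤ) (hK : 0 ≤ K) (hP : 0 < P)
    (hp₁ : ∀ x, p₁ (x + P) = p₁ x) (hp₂ : ∀ x, p₂ (x + P) = p₂ x)
    (hql : ∀ x, x ≤ -K → q x = p₁ x) (hqr : ∀ x, K ≤ x → q x = p₂ x)
    (hdis : ∀ s : ℤ, ∃ x, p₁ x ≠ p₂ (x + s))
    (t a b : ℤ) (hrep : ∀ x, a ≤ x → x ≤ b → q (x + t) = q x)
    (haK : a ≤ -K) (hlen : 2*K + 2*P ≤ min b (-K) - a + 1) :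
    q (a - 1 + t) = q (a - 1) := by
  have key := lemR (fun x => q (-x)) (fun x => p₂ (-x)) (fun x => p₁ (-x)) K P hK hP
    (fun x => by
      have h := hp₂ (-(x+P))
      rw [show -(x+P) + P = -x by ring] at h
      exact h.symm)
    (fun x => by
      have h := hp₁ (-(x+P))
      rw [show -(x+P) + P = -x by ring] at h
      exact h.symm)
    (fun x hx => hqr (-x) (by omega))
    (fun x hx => hql (-x) (by omega))
    (fun s => by
      obtain ⟨x₀, h⟩ := hdis s
      refine ⟨-(x₀+s), ?_⟩
      show p₂ (-(-(x₀+s))) ≠ p₁ (-(-(x₀+s) + s))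
      rw [show -(-(x₀+s)) = x₀ + s by ring, show -(-(x₀+s) + s) = x₀ by ring]
      exact h.symm)
    (-t) (-b) (-a)
    (fun x hx1 hx2 => by
      have h := hrep (-x) (by omega) (by omega)
      show q (-(x + -t)) = q (-x)
      rw [show -(x + -t) = -x + t by ring]
      exact h)
    (by omega) (by omega)
  have key' : q (-(-a + 1 + -t)) = q (-(-a + 1)) := key
  rw [show -(-a + 1 + -t) = a - 1 + t by ring, show -(-a + 1) = a - 1 by ring] at key'
  exact key'

/-- Lemma 3: if two heteroclinic orbits of the Bernoulli shift, going from the periodic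
point `r₁` to the periodic point `r₂`, are orbitally `ε`-close (and close at time `1`),
then they are pointwise `R`-close. -/
theorem heteroclinic_orbital_closeness_implies_pointwise
    (r₁ r₂ : ℤ → Bool) (T₁ T₂ : ℕ) (hT₁ : 0 < T₁) (hT₂ : 0 < T₂)
    (hr₁ : shiftZ (T₁ : ℤ) r₁ = r₁) (hr₂ : shiftZ (T₂ : ℤ) r₂ = r₂)
    (hdisj : Disjoint (orbitShift r₁) (orbitShift r₂))
    (q1 : ℤ → Bool)
    (hq1 : q1 ∈ unstableSetShift r₁ ∩ stableSetShift r₂)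
    (hq1' : q1 ∉ orbitShift r₁ ∪ orbitShift r₂) :
    ∀ R : ℝ, 0 < R →
      ∃ ε : ℝ, 0 < ε ∧
        ∀ q2 : ℤ → Bool,
          q2 ∈ unstableSetShift r₁ ∩ stableSetShift r₂ →
          dSigma (shiftZ 1 q1) (shiftZ 1 q2) < ε →
          (∀ y ∈ orbitShift q1, ∃ z ∈ orbitShift q2, dSigma y z < ε) →
          (∀ z ∈ orbitShift q2, ∃ y ∈ orbitShift q1, dSigma z y < ε) →
          ∀ k : ℤ, dSigma (shiftZ k q1) (shiftZ k q2) ≤ R := by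
  intro R hR
  obtain ⟨⟨ru, hru, hu⟩, ⟨rs, hrs, hs⟩⟩ := hq1
  obtain ⟨K₁, hK₁⟩ := tail_left q1 ru hu
  obtain ⟨K₂, hK₂⟩ := tail_right q1 rs hs
  have hpu : ∀ x, ru (x + (T₁:ℤ)) = ru x := orbit_period r₁ ru T₁ hr₁ hru
  have hps : ∀ x, rs (x + (T₂:ℤ)) = rs x := orbit_period r₂ rs T₂ hr₂ hrs
  set P : ℤ := (T₁:ℤ) * (T₂:ℤ) with hPdef
  have hP : 0 < P := by
    have h1 : (0:ℤ) < (T₁:ℤ) := by exact_mod_cast hT₁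
    have h2 : (0:ℤ) < (T₂:ℤ) := by exact_mod_cast hT₂
    exact mul_pos h1 h2
  have hpu' : ∀ x, ru (x + P) = ru x := fun x => period_mul ru (T₁:ℤ) hpu T₂ x
  have hps' : ∀ x, rs (x + P) = rs x := fun x => by
    have h := period_mul rs (T₂:ℤ) hps T₁ x
    rwa [show (T₂:ℤ) * (T₁:ℤ) = P by rw [hPdef]; ring] at h
  set K : ℤ := ((max K₁ K₂ : ℕ) : ℤ) with hKdef
  have hK : 0 ≤ K := Int.ofNat_nonneg _
  have hKK₁ : (K₁:ℤ) ≤ K := by rw [hKdef]; exact_mod_cast le_max_left _ _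
  have hKK₂ : (K₂:ℤ) ≤ K := by rw [hKdef]; exact_mod_cast le_max_right _ _
  have hql : ∀ x, x ≤ -K → q1 x = ru x := fun x hx => hK₁ x (by omega)
  have hqr : ∀ x, K ≤ x → q1 x = rs x := fun x hx => hK₂ x (by omega)
  have hdis : ∀ s : ℤ, ∃ x, ru x ≠ rs (x + s) := by
    intro s
    have h1 : ru ≠ shiftZ s rs := by
      intro he
      have h2 : shiftZ s rs ∈ orbitShift r₂ := by
        obtain ⟨m, hm⟩ := hrs
        refine ⟨s + m, ?_⟩
        rw [← hm]
        funext k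
        exact congrArg r₂ (by ring)
      exact Set.disjoint_left.1 hdisj hru (he ▸ h2)
    obtain ⟨x, hx⟩ := Function.ne_iff.1 h1
    exact ⟨x, hx⟩
  set n : ℕ := (2*K + 2*P + K + 2).toNat with hndef
  have hN : (n:ℤ) = 2*K + 2*P + K + 2 := Int.toNat_of_nonneg (by omega)
  refine ⟨(2:ℝ)^(-(n:ℤ)), by positivity, ?_⟩
  intro q2 _hq2 hclose _H2 H3
  have base : ∀ x : ℤ, -(n:ℤ) ≤ x → x ≤ (n:ℤ)+1 → q1 x = q2 x := by
    intro x h1 h2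
    have h3 := agree_of_dSigma_lt _ _ n hclose (x - 1) (by omega) (by omega)
    have h4 : q1 (x - 1 + 1) = q2 (x - 1 + 1) := h3
    rwa [show x - 1 + 1 = x by ring] at h4
  have main : ∀ j : ℕ, ∀ x : ℤ, -(n:ℤ) - (j:ℤ) ≤ x → x ≤ (n:ℤ) + 1 + (j:ℤ) → q1 x = q2 x := by
    intro j
    induction j with
    | zero =>
      intro x h1 h2
      exact base x (by omega) (by omega)
    | succ i ih =>
      intro x h1 h2
      rw [show ((i+1:ℕ):ℤ) = (i:ℤ) + 1 by push_cast; ring] at h1 h2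
      have hi : (0:ℤ) ≤ (i:ℤ) := Int.ofNat_nonneg _
      by_cases hxu : x ≤ (n:ℤ) + 1 + (i:ℤ)
      · by_cases hxl : -(n:ℤ) - (i:ℤ) ≤ x
        · exact ih x hxl hxu
        · -- left step : x = -n - i - 1
          have hx : x = -(n:ℤ) - (i:ℤ) - 1 := by omega
          obtain ⟨y, ⟨k, rfl⟩, hd⟩ := H3 (shiftZ (-(i:ℤ)) q2) ⟨-(i:ℤ), rfl⟩
          set m : ℤ := -(i:ℤ) with hm
          have hagree : ∀ u : ℤ, -(n:ℤ)-1 ≤ u → u ≤ (n:ℤ) →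
              q2 (u + m) = q1 (u + k) := fun u hu1 hu2 =>
            agree_of_dSigma_lt _ _ n hd u hu1 hu2
          have hrep : ∀ z, m - (n:ℤ) ≤ z → z ≤ m + (n:ℤ) → q1 (z + (k - m)) = q1 z := by
            intro z hz1 hz2
            have h1' : q2 z = q1 z := (ih z (by omega) (by omega)).symm
            have h2' := hagree (z - m) (by omega) (by omega)
            rw [show z - m + m = z by ring] at h2'
            have e : q1 (z + (k - m)) = q1 (z - m + k) := congrArg q1 (by ring)
            rw [e, ← h2', h1']
          have hstep := lemL q1 ru rs K P hK hP hpu' hps' hql hqr hdis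
            (k - m) (m - (n:ℤ)) (m + (n:ℤ)) hrep (by omega)
            (by rcases min_cases (m + (n:ℤ)) (-K) with ⟨h,h'⟩|⟨h,h'⟩ <;> omega)
          -- hstep : q1 (m - n - 1 + (k - m)) = q1 (m - n - 1)
          have h3 := hagree (-(n:ℤ)-1) le_rfl (by omega)
          -- h3 : q2 (-n-1+m) = q1 (-n-1+k)
          rw [show x = -(n:ℤ)-1+m by omega]
          rw [h3]
          have e1 : q1 (-(n:ℤ)-1+m) = q1 (m - (n:ℤ) - 1) := congrArg q1 (by ring)
          have e2 : q1 (-(n:ℤ)-1+k) = q1 (m - (n:ℤ) - 1 + (k - m)) := congrArg q1 (by ring)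
          rw [e1, e2]
          exact hstep.symm
      · -- right step : x = n + 2 + i
        have hx : x = (n:ℤ) + 2 + (i:ℤ) := by omega
        obtain ⟨y, ⟨k, rfl⟩, hd⟩ := H3 (shiftZ ((i:ℤ)+2) q2) ⟨(i:ℤ)+2, rfl⟩
        set m : ℤ := (i:ℤ)+2 with hm
        have hagree : ∀ u : ℤ, -(n:ℤ)-1 ≤ u → u ≤ (n:ℤ) →
            q2 (u + m) = q1 (u + k) := fun u hu1 hu2 =>
          agree_of_dSigma_lt _ _ n hd u hu1 hu2
        have hrep : ∀ z, m - (n:ℤ) - 1 ≤ z → z ≤ m + (n:ℤ) - 1 → q1 (z + (k - m)) = q1 z := by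
          intro z hz1 hz2
          have h1' : q2 z = q1 z := (ih z (by omega) (by omega)).symm
          have h2' := hagree (z - m) (by omega) (by omega)
          rw [show z - m + m = z by ring] at h2'
          have e : q1 (z + (k - m)) = q1 (z - m + k) := congrArg q1 (by ring)
          rw [e, ← h2', h1']
        have hstep := lemR q1 ru rs K P hK hP hpu' hps' hql hqr hdis
          (k - m) (m - (n:ℤ) - 1) (m + (n:ℤ) - 1) hrep (by omega)
          (by rcases max_cases (m - (n:ℤ) - 1) K with ⟨h,h'⟩|⟨h,h'⟩ <;> omega)
        -- hstep : q1 (m + n - 1 + 1 + (k - m)) = q1 (m + n - 1 + 1)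
        have h3 := hagree (n:ℤ) (by omega) le_rfl
        -- h3 : q2 (n + m) = q1 (n + k)
        rw [show x = (n:ℤ) + m by omega]
        rw [h3]
        have e1 : q1 ((n:ℤ)+m) = q1 (m + (n:ℤ) - 1 + 1) := congrArg q1 (by ring)
        have e2 : q1 ((n:ℤ)+k) = q1 (m + (n:ℤ) - 1 + 1 + (k - m)) := congrArg q1 (by ring)
        rw [e1, e2]
        exact hstep.symm
  have hq12 : q1 = q2 := by
    funext x
    exact main (x.natAbs + 1) x (by omega) (by omega)
  intro k
  rw [hq12, dSigma_self]
  exact hR.le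
end
end
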